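/- arXiv:1601.01895 — 3 statements merged into one kernel-verified Lean document; each statement's English description precedes it below -/
import Mathlib

section
/- Let x ∈ [0,1] be a constant. Consider two players α and β, each choosing a number in [0,1] (their probability of playing Top, denoted x_α and x_β). Player α's payoff is x_α·x + (1−x_α)·x_β and player β's payoff is x_β·x_α + (1−x_β)·x. Then at any Nash equilibrium of this two-player game (i.e., any pair (x_α, x_β) ∈ [0,1]² such that x_α is a best response to x_β and vice versa), one has x_α = x. -/
/-- In the two-player gadget game with parameter `x ∈ [0,1]`,
where player α's payoff is `a*x + (1-a)*x_β` and player β's payoff is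
`b*x_α + (1-b)*x`, any Nash equilibrium `(x_α, x_β) ∈ [0,1]²` satisfies `x_α = x`. -/
theorem stmt0 (x xa xb : ℝ) (hx : x ∈ Set.Icc (0:ℝ) 1)
    (hxa : xa ∈ Set.Icc (0:ℝ) 1) (hxb : xb ∈ Set.Icc (0:ℝ) 1)
    (hbra : ∀ a ∈ Set.Icc (0:ℝ) 1, a * x + (1 - a) * xb ≤ xa * x + (1 - xa) * xb)
    (hbrb : ∀ b ∈ Set.Icc (0:ℝ) 1, b * xa + (1 - b) * x ≤ xb * xa + (1 - xb) * x) :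
    xa = x := by
  obtain ⟨hx0, hx1⟩ := hx
  obtain ⟨ha0, ha1⟩ := hxa
  obtain ⟨hb0, hb1⟩ := hxb
  have h1 := hbra 0 ⟨le_refl _, zero_le_one⟩
  have h2 := hbra 1 ⟨zero_le_one, le_refl _⟩
  have h3 := hbrb 0 ⟨le_refl _, zero_le_one⟩
  have h4 := hbrb 1 ⟨zero_le_one, le_refl _⟩
  nlinarith [mul_nonneg ha0 hb0, mul_nonneg (sub_nonneg.2 ha1) (sub_nonneg.2 hb1), sq_nonneg (xa - x), sq_nonneg (xb - x), sq_nonneg (xa - xb)]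
end

section
/- Let x ∈ [0,1] and q ≥ 1. Suppose real numbers x_0,…,x_{q−1} and y_0,…,y_{q−1} in [0,1] satisfy the following equilibrium conditions for each k: (x_k > 0 → x·∏_{j<k} x_j ≥ y_k), (x_k < 1 → x·∏_{j<k} x_j ≤ y_k), (y_k > 0 → x_k ≥ x·∏_{j<k} x_j), and (y_k < 1 → x_k ≤ x·∏_{j<k} x_j). Then for every k ∈ {0,…,q−1}, x_k = x^(2^k). -/
/-- the power gadget.  If `x ∈ [0,1]`, `q ≥ 1`, and `X k, Y k ∈ [0,1]`
for `k < q` satisfy the equilibrium conditions of the gadget game, then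
`X k = x ^ (2 ^ k)` for every `k < q`. -/
theorem stmt1 (q : ℕ) (hq : 1 ≤ q) (x : ℝ) (hx : x ∈ Set.Icc (0:ℝ) 1)
    (X Y : ℕ → ℝ)
    (hX : ∀ k < q, X k ∈ Set.Icc (0:ℝ) 1) (hY : ∀ k < q, Y k ∈ Set.Icc (0:ℝ) 1)
    (h1 : ∀ k < q, 0 < X k → Y k ≤ x * ∏ j ∈ Finset.range k, X j)
    (h2 : ∀ k < q, X k < 1 → x * ∏ j ∈ Finset.range k, X j ≤ Y k)
    (h3 : ∀ k < q, 0 < Y k → x * ∏ j ∈ Finset.range k, X j ≤ X k)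
    (h4 : ∀ k < q, Y k < 1 → X k ≤ x * ∏ j ∈ Finset.range k, X j) :
    ∀ k < q, X k = x ^ 2 ^ k := by
  have key : ∀ k < q, X k = x * ∏ j ∈ Finset.range k, X j := by
    intro k hk
    set P := x * ∏ j ∈ Finset.range k, X j with hP
    have hprod0 : 0 ≤ ∏ j ∈ Finset.range k, X j :=
      Finset.prod_nonneg fun j hj => (hX j ((Finset.mem_range.mp hj).trans hk)).1
    have hprod1 : ∏ j ∈ Finset.range k, X j ≤ 1 :=
      Finset.prod_le_one (fun j hj => (hX j ((Finset.mem_range.mp hj).trans hk)).1)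
        (fun j hj => (hX j ((Finset.mem_range.mp hj).trans hk)).2)
    have hP0 : 0 ≤ P := mul_nonneg hx.1 hprod0
    have hP1 : P ≤ 1 := mul_le_one₀ hx.2 hprod0 hprod1
    rcases lt_trichotomy (X k) P with h | h | h
    · exfalso
      have hXlt1 : X k < 1 := lt_of_lt_of_le h hP1
      have hYge := h2 k hk hXlt1
      have hY0 : 0 < Y k := lt_of_le_of_lt (hX k hk).1 (lt_of_lt_of_le h hYge)
      exact absurd (h3 k hk hY0) (not_le.mpr h)
    · exact h
    · exfalso
      have hX0 : 0 < X k := lt_of_le_of_lt hP0 h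
      have hYle := h1 k hk hX0
      have hY1 : Y k < 1 := lt_of_le_of_lt hYle (lt_of_lt_of_le h (hX k hk).2)
      exact absurd (h4 k hk hY1) (not_le.mpr h)
  have main : ∀ k ≤ q, ∏ j ∈ Finset.range k, X j = x ^ (2 ^ k - 1) := by
    intro k
    induction k with
    | zero => intro _; simp
    | succ n ih =>
      intro hk
      have hn : n < q := hk
      rw [Finset.prod_range_succ, ih hn.le, key n hn, ih hn.le]
      rw [← pow_succ' x (2 ^ n - 1), ← pow_add]
      congr 1
      have h1 : 1 ≤ 2 ^ n := Nat.one_le_two_pow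
      omega
  intro k hk
  rw [key k hk, main k hk.le, ← pow_succ' x (2 ^ k - 1)]
  congr 1
  have : 1 ≤ 2 ^ k := Nat.one_le_two_pow
  omega
end

section
/- In the constructed game (as in the context), at every Nash equilibrium, the vector (x_1,…,x_n) of the first n players' probabilities of playing Top belongs to E. -/
/-- Best-response condition of a player of a binary game who plays Top with
probability `v` and whose (expected) payoffs for Top and Bottom are `top`, `bot`. -/
def BR (v top bot : ℝ) : Prop :=
  0 ≤ v ∧ v ≤ 1 ∧ (0 < v → bot ≤ top) ∧ (v < 1 → top ≤ bot)

/-- Nash equilibrium conditions of the game constructed in the proof of the main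
result (see the paper): players `X_i`, power-gadget players `X_{ik}`, `Y_{ik}`
(`k < q`), players `S_{ab}` and player `U`, with fixed `z ∈ E`. -/
def ConstructedEq (n q A B : ℕ)
    (f : Fin A → Fin B → ((Fin n × Fin q → ℝ) → ℝ)) (z : Fin n → ℝ)
    (x : Fin n → ℝ) (xx yy : Fin n → ℕ → ℝ)
    (s : Fin A → Fin B → ℝ) (u : ℝ) : Prop :=
  (∀ i, BR (x i) ((z i - xx i 0) * u) 0) ∧
  (∀ i, ∀ k < q, BR (xx i k) (x i * ∏ j ∈ Finset.range k, xx i j) (yy i k)) ∧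
  (∀ i, ∀ k < q, BR (yy i k) (xx i k) (x i * ∏ j ∈ Finset.range k, xx i j)) ∧
  (∀ a b, BR (s a b) (f a b (fun p => xx p.1 (p.2 : ℕ))) 0) ∧
  BR u (∏ a, ∑ b, s a b) 0

lemma br_pos_eq_one {v top : ℝ} (h : BR v top 0) (ht : 0 < top) : v = 1 := by
  by_contra hv
  exact absurd (h.2.2.2 (lt_of_le_of_ne h.2.1 hv)) (not_le.2 ht)

lemma br_neg_eq_zero {v top : ℝ} (h : BR v top 0) (ht : top < 0) : v = 0 := by
  by_contra hv
  exact absurd (h.2.2.1 (lt_of_le_of_ne h.1 (Ne.symm hv))) (not_le.2 ht)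

/-- The matching-pennies gadget: at equilibrium `v = P`. -/
lemma gadget_eq {v y Pv : ℝ} (hx : BR v Pv y) (hy : BR y v Pv)
    (hP0 : 0 ≤ Pv) (hP1 : Pv ≤ 1) : v = Pv := by
  rcases lt_trichotomy v Pv with h | h | h
  · -- y must be 0 (if y>0 then Pv ≤ v, false); then v<1 gives Pv ≤ y = 0
    have hy0 : y = 0 := by
      by_contra hy0
      exact absurd (hy.2.2.1 (lt_of_le_of_ne hy.1 (Ne.symm hy0))) (not_le.2 h)
    have hv1 : v < 1 := lt_of_lt_of_le h hP1
    have h2 := hx.2.2.2 hv1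
    have h3 := hx.1
    rw [hy0] at h2
    linarith
  · exact h
  · have hy1 : y = 1 := by
      by_contra hy1
      exact absurd (hy.2.2.2 (lt_of_le_of_ne hy.2.1 hy1)) (not_le.2 h)
    have hv0 : 0 < v := lt_of_le_of_lt hP0 h
    have := hx.2.2.1 hv0
    rw [hy1] at this
    have := hx.2.1
    linarith

lemma sum_range_two_pow (k : ℕ) : (∑ j ∈ Finset.range k, 2 ^ j) + 1 = 2 ^ k := by
  induction k with
  | zero => simp
  | succ k ih => rw [Finset.sum_range_succ, pow_succ]; omega

theorem stmt19 (n q A B : ℕ) (hq : 1 ≤ q)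
    (P : Fin A → Fin B → MvPolynomial (Fin n) ℝ)
    (hdeg : ∀ a b i, (P a b).degreeOf i < 2 ^ q)
    (hsub : (⋃ a, ⋂ b, {y : Fin n → ℝ | MvPolynomial.eval y (P a b) ≤ 0}) ⊆
      {y | ∀ i, y i ∈ Set.Icc (0:ℝ) 1})
    (f : Fin A → Fin B → ((Fin n × Fin q → ℝ) → ℝ))
    (hf : ∀ a b (y : Fin n → ℝ),
      f a b (fun p => y p.1 ^ 2 ^ (p.2 : ℕ)) = MvPolynomial.eval y (P a b))
    (z : Fin n → ℝ)
    (hz : z ∈ ⋃ a, ⋂ b, {y : Fin n → ℝ | MvPolynomial.eval y (P a b) ≤ 0})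
    (x : Fin n → ℝ) (xx yy : Fin n → ℕ → ℝ) (s : Fin A → Fin B → ℝ) (u : ℝ)
    (heq : ConstructedEq n q A B f z x xx yy s u) :
    x ∈ ⋃ a, ⋂ b, {y : Fin n → ℝ | MvPolynomial.eval y (P a b) ≤ 0} := by
  obtain ⟨hX, hXX, hYY, hS, hU⟩ := heq
  -- bounds
  have hx0 : ∀ i, 0 ≤ x i := fun i => (hX i).1
  have hx1 : ∀ i, x i ≤ 1 := fun i => (hX i).2.1
  have hxx0 : ∀ i k, k < q → 0 ≤ xx i k := fun i k hk => (hXX i k hk).1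
  have hxx1 : ∀ i k, k < q → xx i k ≤ 1 := fun i k hk => (hXX i k hk).2.1
  -- gadget values
  have hgad : ∀ i, ∀ k < q, xx i k = x i * ∏ j ∈ Finset.range k, xx i j := by
    intro i k hk
    apply gadget_eq (hXX i k hk) (hYY i k hk)
    · exact mul_nonneg (hx0 i) (Finset.prod_nonneg fun j hj =>
        hxx0 i j (lt_trans (Finset.mem_range.1 hj) hk))
    · calc x i * ∏ j ∈ Finset.range k, xx i j
          ≤ 1 * 1 := by
            apply mul_le_mul (hx1 i) ?_ ?_ zero_le_one
            · exact Finset.prod_le_one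
                (fun j hj => hxx0 i j (lt_trans (Finset.mem_range.1 hj) hk))
                (fun j hj => hxx1 i j (lt_trans (Finset.mem_range.1 hj) hk))
            · exact Finset.prod_nonneg fun j hj =>
                hxx0 i j (lt_trans (Finset.mem_range.1 hj) hk)
        _ = 1 := one_mul 1
  -- xx i k = x i ^ 2^k
  have hpow : ∀ k, k < q → ∀ i, xx i k = x i ^ 2 ^ k := by
    intro k
    induction k using Nat.strong_induction_on with
    | _ k ih =>
      intro hk i
      have : ∏ j ∈ Finset.range k, xx i j = ∏ j ∈ Finset.range k, x i ^ 2 ^ j :=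
        Finset.prod_congr rfl fun j hj =>
          ih j (Finset.mem_range.1 hj) (lt_trans (Finset.mem_range.1 hj) hk) i
      rw [hgad i k hk, this, Finset.prod_pow_eq_pow_sum, ← pow_succ',
        sum_range_two_pow]
  by_contra hxE
  -- every clause has a violated constraint
  have hab : ∀ a, ∃ b, 0 < MvPolynomial.eval x (P a b) := by
    intro a
    by_contra h
    push_neg at h
    exact hxE (Set.mem_iUnion.2 ⟨a, Set.mem_iInter.2 fun b => h b⟩)
  -- u = 1
  have hfx : ∀ a b, f a b (fun p => xx p.1 (p.2 : ℕ)) = MvPolynomial.eval x (P a b) := by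
    intro a b
    rw [← hf a b x]
    congr 1
    funext p
    exact hpow p.2 p.2.isLt p.1
  have hsum : ∀ a, 0 < ∑ b, s a b := by
    intro a
    obtain ⟨b, hb⟩ := hab a
    have hs1 : s a b = 1 := by
      apply br_pos_eq_one (hS a b)
      rw [hfx a b]; exact hb
    have : (1:ℝ) ≤ ∑ b', s a b' := by
      rw [← hs1]
      exact Finset.single_le_sum (fun b' _ => (hS a b').1) (Finset.mem_univ b)
    linarith
  have hu1 : u = 1 := br_pos_eq_one hU (Finset.prod_pos fun a _ => hsum a)
  -- x = z
  have hzb := hsub hz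
  have hxz : x = z := by
    funext i
    have hXi := hX i
    rw [hu1, mul_one, hgad i 0 hq] at hXi
    simp only [Finset.range_zero, Finset.prod_empty, mul_one] at hXi
    rcases lt_trichotomy (x i) (z i) with h | h | h
    · have := br_pos_eq_one hXi (by linarith)
      have := (hzb i).2
      linarith
    · exact h
    · have := br_neg_eq_zero hXi (by linarith)
      have := (hzb i).1
      linarith
  exact hxE (hxz ▸ hz)
end
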